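/- arXiv:2605.16601 — 6 statements merged into one kernel-verified Lean document; each statement's English description precedes it below -/
import Mathlib

section
/- Fix an integer n ≥ 2. Suppose d̂_1,…,d̂_n ≥ 0 and h:[0,1]→[0,∞) is nondecreasing and integrable, satisfying: d̂_1 ≤ ∫_0^1 h(u) du; d̂_i ≤ ∫_0^q h(u) du + (1−q)·d̂_{i−1} for every i = 2,…,n and every q ∈ [0,1]; and ∫_0^1 h(u)·P_n'(1−u) du = 1. Suppose also α_1 ≥ 0, α_i:[0,1]→[0,∞) integrable for i = 2,…,n, η:[0,1]→[0,∞) continuously differentiable with η(1) = 0, and ζ ∈ ℝ, satisfying: α_1 ≥ ∫_0^1 (1−q)·α_2(q) dq + 1; ∫_0^1 α_i(q) dq ≥ ∫_0^1 (1−q)·α_{i+1}(q) dq + 1 for i = 2,…,n−1; ∫_0^1 α_n(q) dq ≥ 1; and ζ·P_n'(1−u) + η'(u) ≥ α_1 + Σ_{i=2}^n ∫_u^1 α_i(q) dq for all u ∈ [0,1]. Then ζ ≥ Σ_{i=1}^n d̂_i (weak duality between the primal linear program (LP)_DC and its dual (DLP)_DC). -/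
/-!
Multiply the pointwise dual constraint by `h ≥ 0` and integrate over `[0, 1]`. By the
normalisation `∫ h P_n'(1 - u) = 1` the left side becomes `ζ + ∫ h η'`, and
`∫ h η' ≤ -h(0) η(0) ≤ 0`: this is the Stieltjes integration by parts
`∫ h dη = [h η] - ∫ η dh` with `dh ≥ 0`, carried out with Riemann sums because `h` is only
monotone. Exchanging the order of integration turns `∫ h(u) ∫_u^1 α_i` into `∫ α_i(q) H(q)` with
`H(q) = ∫_0^q h`, and integrating the primal constraints against `α_i ≥ 0` bounds this below by
`a_i d̂_i - b_i d̂_{i-1}`, where `a_i = ∫ α_i` and `b_i = ∫ (1 - q) α_i`. What remains is weak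
duality for the resulting finite system, whose dual constraints read `a_i ≥ b_{i+1} + 1`.
-/

open MeasureTheory Finset

/-- `P_n(t) = ∑_{i=1}^n t^i`. -/
noncomputable def Pn (n : ℕ) (t : ℝ) : ℝ := ∑ i ∈ Finset.Icc 1 n, t ^ i

/-- `P_n'(t) = ∑_{i=1}^n i t^{i-1}`. -/
noncomputable def Pn' (n : ℕ) (t : ℝ) : ℝ := ∑ i ∈ Finset.Icc 1 n, (i : ℝ) * t ^ (i - 1)

open Set

lemma integral_mul_integral_swap_triangle {f g : ℝ → ℝ} {a b : ℝ}
    (hf : IntervalIntegrable f volume a b) (hg : IntervalIntegrable g volume a b) :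
    ∫ u in a..b, f u * ∫ q in u..b, g q = ∫ q in a..b, g q * ∫ u in a..q, f u := by
  set F := fun x => ∫ t in a..x, f t
  set G := fun x => ∫ t in b..x, g t
  have hderiv : ∀ᵐ x, x ∈ uIoc a b → deriv F x = f x ∧ deriv G x = g x := by
    filter_upwards [hf.ae_hasDerivAt_integral, hg.ae_hasDerivAt_integral] with x hfx hgx hx
    have hx' := uIoc_subset_uIcc hx
    exact ⟨(hfx hx' a (by simp)).deriv, (hgx hx' b (by simp)).deriv⟩
  have hF : ∫ x in a..b, deriv F x * G x = ∫ x in a..b, f x * G x :=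
    intervalIntegral.integral_congr_ae (hderiv.mono fun x hx hab => by rw [(hx hab).1])
  have hG : ∫ x in a..b, F x * deriv G x = ∫ x in a..b, F x * g x :=
    intervalIntegral.integral_congr_ae (hderiv.mono fun x hx hab => by rw [(hx hab).2])
  have hparts := (hf.absolutelyContinuousOnInterval_intervalIntegral (c := a) (by simp))
    |>.integral_mul_deriv_eq_deriv_mul
      (hg.absolutelyContinuousOnInterval_intervalIntegral (c := b) (by simp))
  rw [hF, hG] at hparts
  simp only [F, G, intervalIntegral.integral_same, mul_zero, zero_mul, sub_zero, zero_sub] at hparts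
  have hsymm : ∀ u, f u * ∫ q in u..b, g q = -(f u * G u) := fun u => by
    rw [intervalIntegral.integral_symm]; ring
  simp_rw [hsymm, intervalIntegral.integral_neg, mul_comm (g _)]
  linarith

/- Since `η x ≥ 0` and `h x ≤ h y`, the main term `h y * (η y - η x)` is bounded by the increment
of `h * η`, so over a partition both error terms telescope. -/
lemma integral_mul_deriv_le_add_of_abs_le {h η η' : ℝ → ℝ} {x y M : ℝ} (hxy : x ≤ y)
    (hh : MonotoneOn h (Icc x y)) (hηx : 0 ≤ η x)
    (hη : ∀ u ∈ Icc x y, HasDerivAt η (η' u) u) (hη' : ContinuousOn η' (Icc x y))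
    (hM : ∀ u ∈ Icc x y, |η' u| ≤ M) :
    ∫ u in x..y, h u * η' u ≤ h y * η y - h x * η x + (h y - h x) * (M * (y - x)) := by
  have hx : x ∈ Icc x y := left_mem_Icc.2 hxy
  have hy : y ∈ Icc x y := right_mem_Icc.2 hxy
  have hhxy : h x ≤ h y := hh hx hy hxy
  rw [← Set.uIcc_of_le hxy] at hη hη'
  have hη'int : IntervalIntegrable (fun u => h y * η' u) volume x y :=
    hη'.intervalIntegrable.const_mul _
  have hpointwise : ∀ u ∈ Icc x y, h u * η' u ≤ h y * η' u + (h y - h x) * M := by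
    intro u hu
    have hxu := hh hx hu hu.1
    have huy := hh hu hy hu.2
    have hMu := hM u hu
    nlinarith [neg_abs_le (η' u), abs_nonneg (η' u)]
  calc ∫ u in x..y, h u * η' u
      ≤ ∫ u in x..y, (h y * η' u + (h y - h x) * M) :=
        intervalIntegral.integral_mono_on hxy
          ((Set.uIcc_of_le hxy ▸ hh).intervalIntegrable.mul_continuousOn hη')
          (hη'int.add intervalIntegrable_const) hpointwise
    _ = h y * (η y - η x) + (h y - h x) * (M * (y - x)) := by
        rw [intervalIntegral.integral_add hη'int intervalIntegrable_const,
          intervalIntegral.integral_const_mul,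
          intervalIntegral.integral_eq_sub_of_hasDerivAt hη hη'.intervalIntegrable,
          intervalIntegral.integral_const, smul_eq_mul]
        ring
    _ ≤ h y * η y - h x * η x + (h y - h x) * (M * (y - x)) := by nlinarith

lemma integral_mul_deriv_le_of_monotoneOn {h η η' : ℝ → ℝ} {a b : ℝ} (hab : a ≤ b)
    (hh : MonotoneOn h (Icc a b)) (hη0 : ∀ u ∈ Icc a b, 0 ≤ η u)
    (hη : ∀ u ∈ Icc a b, HasDerivAt η (η' u) u) (hη' : ContinuousOn η' (Icc a b)) :
    ∫ u in a..b, h u * η' u ≤ h b * η b - h a * η a := by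
  obtain ⟨M, hM⟩ := isCompact_Icc.exists_bound_of_continuousOn hη'
  have hint : IntervalIntegrable (fun u => h u * η' u) volume a b :=
    (Set.uIcc_of_le hab ▸ hh).intervalIntegrable.mul_continuousOn (Set.uIcc_of_le hab ▸ hη')
  have hpartition : ∀ N : ℕ, 0 < N → ∫ u in a..b, h u * η' u
      ≤ h b * η b - h a * η a + (h b - h a) * (M * (b - a)) / N := by
    intro N hN
    have hNpos : (0 : ℝ) < N := Nat.cast_pos.2 hN
    set δ := (b - a) / N with hδ
    set x : ℕ → ℝ := fun k => a + k * δ with hx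
    have hx0 : x 0 = a := by simp [hx]
    have hxN : x N = b := by simp only [hx, hδ]; field_simp; ring
    have hδ0 : 0 ≤ δ := div_nonneg (sub_nonneg.2 hab) hNpos.le
    have hxstep : ∀ k, x (k + 1) = x k + δ := fun k => by simp only [hx]; push_cast; ring
    have hsub : ∀ k < N, Icc (x k) (x (k + 1)) ⊆ Icc a b := by
      intro k hk
      refine Icc_subset_Icc ?_ ?_
      · simp only [hx]; nlinarith [(k.cast_nonneg : (0:ℝ) ≤ k)]
      · rw [← hxN]; simp only [hx]
        gcongr; exact_mod_cast hk
    calc ∫ u in a..b, h u * η' u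
        = ∑ k ∈ range N, ∫ u in x k..x (k + 1), h u * η' u := by
          rw [intervalIntegral.sum_integral_adjacent_intervals, hx0, hxN]
          intro k hk
          exact hint.mono_set (by
            rw [Set.uIcc_of_le hab, Set.uIcc_of_le (by rw [hxstep]; linarith)]; exact hsub k hk)
      _ ≤ ∑ k ∈ range N, (h (x (k + 1)) * η (x (k + 1)) - h (x k) * η (x k)
            + (h (x (k + 1)) - h (x k)) * (M * δ)) := by
          refine sum_le_sum fun k hk => ?_
          have hk := hsub k (mem_range.1 hk)
          have := integral_mul_deriv_le_add_of_abs_le (by rw [hxstep]; linarith) (hh.mono hk)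
            (hη0 _ (hk (left_mem_Icc.2 (by rw [hxstep]; linarith)))) (fun u hu => hη u (hk hu))
            (hη'.mono hk) (fun u hu => by simpa using hM u (hk hu))
          simpa only [hxstep, add_sub_cancel_left] using this
      _ = h b * η b - h a * η a + (h b - h a) * (M * (b - a)) / N := by
          rw [sum_add_distrib, ← sum_mul, sum_range_sub (fun k => h (x k) * η (x k)),
            sum_range_sub (fun k => h (x k)), hx0, hxN, hδ]
          ring
  refine ge_of_tendsto ?_ (Filter.eventually_atTop.2 ⟨1, hpartition⟩)
  simpa using (tendsto_const_div_atTop_nhds_zero_nat ((h b - h a) * (M * (b - a)))).const_add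
    (h b * η b - h a * η a)

lemma integral_mul_le_of_le_add_mul {w G c : ℝ → ℝ} {a b x y : ℝ} (hab : a ≤ b)
    (hw0 : ∀ q ∈ Icc a b, 0 ≤ w q) (hw : IntervalIntegrable w volume a b)
    (hG : ContinuousOn G (Icc a b)) (hc : ContinuousOn c (Icc a b))
    (hxy : ∀ q ∈ Icc a b, x ≤ G q + c q * y) :
    (∫ q in a..b, w q) * x ≤ (∫ q in a..b, w q * G q) + (∫ q in a..b, c q * w q) * y := by
  rw [← Set.uIcc_of_le hab] at hG hc
  have hwG := hw.mul_continuousOn hG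
  have hcw := hw.continuousOn_mul hc
  calc (∫ q in a..b, w q) * x
      = ∫ q in a..b, w q * x := (intervalIntegral.integral_mul_const _ _).symm
    _ ≤ ∫ q in a..b, (w q * G q + c q * w q * y) :=
        intervalIntegral.integral_mono_on hab (hw.mul_const x) (hwG.add (hcw.mul_const y))
          fun q hq => by nlinarith [mul_le_mul_of_nonneg_left (hxy q hq) (hw0 q hq)]
    _ = (∫ q in a..b, w q * G q) + (∫ q in a..b, c q * w q) * y := by
        rw [intervalIntegral.integral_add hwG (hcw.mul_const y),
          intervalIntegral.integral_mul_const]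

lemma sum_le_of_dual_feasible {n : ℕ} (hn : 2 ≤ n) {a₁ : ℝ} {a b d : ℕ → ℝ}
    (hd : ∀ i ∈ Finset.Icc 1 n, 0 ≤ d i) (h₁ : b 2 + 1 ≤ a₁)
    (hmid : ∀ i, 2 ≤ i → i ≤ n - 1 → b (i + 1) + 1 ≤ a i) (hlast : 1 ≤ a n) :
    ∑ i ∈ Finset.Icc 1 n, d i
      ≤ a₁ * d 1 + ∑ i ∈ Finset.Icc 2 n, (a i * d i - b i * d (i - 1)) := by
  have hd' : ∀ i, 1 ≤ i → i ≤ n → 0 ≤ d i := fun i h1 h2 =>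
    hd i (Finset.mem_Icc.2 ⟨h1, h2⟩)
  -- the surplus `(a k - 1) * d k` pays for the term `b (k + 1) * d k` of the next constraint
  have key : ∀ k, 2 ≤ k → k ≤ n → ∑ i ∈ Finset.Icc 1 k, d i + (a k - 1) * d k
      ≤ a₁ * d 1 + ∑ i ∈ Finset.Icc 2 k, (a i * d i - b i * d (i - 1)) := by
    intro k hk
    induction k, hk using Nat.le_induction with
    | base =>
      intro _
      simp only [Nat.reduceAdd, Nat.one_le_ofNat, sum_Icc_succ_top, Finset.Icc_self,
        sum_singleton, sum_sub_distrib, Nat.add_one_sub_one]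
      nlinarith [hd' 1 le_rfl (by omega)]
    | succ k hk ih =>
      intro hkn
      rw [Finset.sum_Icc_succ_top (by omega), Finset.sum_Icc_succ_top (by omega),
        Nat.add_sub_cancel]
      nlinarith [ih (by omega), mul_nonneg (sub_nonneg.2 (hmid k hk (by omega)))
        (hd' k (by omega) (by omega))]
  nlinarith [key n hn le_rfl, hd' n (by omega) le_rfl]

lemma integrated_dual_constraint_le {n : ℕ} {h : ℝ → ℝ}
    (hh0 : ∀ u ∈ Icc (0:ℝ) 1, 0 ≤ h u) (hhmono : MonotoneOn h (Icc 0 1))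
    (hc3 : ∫ u in (0:ℝ)..1, h u * Pn' n (1 - u) = 1)
    {α₁ : ℝ} {α : ℕ → ℝ → ℝ}
    (hαint : ∀ i ∈ Finset.Icc 2 n, IntegrableOn (α i) (Icc 0 1))
    {η η' : ℝ → ℝ} (hη0 : ∀ u ∈ Icc (0:ℝ) 1, 0 ≤ η u)
    (hηderiv : ∀ u ∈ Icc (0:ℝ) 1, HasDerivAt η (η' u) u)
    (hη'cont : ContinuousOn η' (Icc 0 1)) (hη1 : η 1 = 0) {ζ : ℝ}
    (hdual4 : ∀ u ∈ Icc (0:ℝ) 1,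
      α₁ + ∑ i ∈ Finset.Icc 2 n, ∫ q in u..(1:ℝ), α i q
        ≤ ζ * Pn' n (1 - u) + η' u) :
    α₁ * (∫ u in (0:ℝ)..1, h u)
      + ∑ i ∈ Finset.Icc 2 n, ∫ q in (0:ℝ)..1, α i q * ∫ u in (0:ℝ)..q, h u
      ≤ ζ := by
  have hI : uIcc (0:ℝ) 1 = Icc (0:ℝ) 1 := Set.uIcc_of_le zero_le_one
  have hh : IntervalIntegrable h volume 0 1 := (hI ▸ hhmono).intervalIntegrable
  have hA : ∀ i ∈ Finset.Icc 2 n,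
      ContinuousOn (fun u => ∫ q in u..(1:ℝ), α i q) (uIcc 0 1) := fun i hi =>
    intervalIntegral.continuousOn_primitive_interval_left (hI ▸ hαint i hi)
  have hP : ContinuousOn (fun u => Pn' n (1 - u)) (uIcc 0 1) := by unfold Pn'; fun_prop
  have hhη : IntervalIntegrable (fun u => h u * η' u) volume 0 1 :=
    hh.mul_continuousOn (hI ▸ hη'cont)
  have hη : ∫ u in (0:ℝ)..1, h u * η' u ≤ 0 := by
    have := integral_mul_deriv_le_of_monotoneOn zero_le_one hhmono hη0 hηderiv hη'cont
    rw [hη1, mul_zero, zero_sub] at this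
    linarith [mul_nonneg (hh0 0 (by simp)) (hη0 0 (by simp))]
  calc α₁ * (∫ u in (0:ℝ)..1, h u)
        + ∑ i ∈ Finset.Icc 2 n, ∫ q in (0:ℝ)..1, α i q * ∫ u in (0:ℝ)..q, h u
      = ∫ u in (0:ℝ)..1,
          h u * (α₁ + ∑ i ∈ Finset.Icc 2 n, ∫ q in u..(1:ℝ), α i q) := by
        have hsum : IntervalIntegrable
            (fun u => ∑ i ∈ Finset.Icc 2 n, h u * ∫ q in u..(1:ℝ), α i q) volume 0 1 := by
          simpa only [Finset.mul_sum] using hh.mul_continuousOn (continuousOn_finsetSum _ hA)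
        simp_rw [mul_add, Finset.mul_sum]
        rw [intervalIntegral.integral_add (hh.mul_const _) hsum,
          intervalIntegral.integral_finsetSum fun i hi => hh.mul_continuousOn (hA i hi),
          intervalIntegral.integral_mul_const, mul_comm]
        congr 1
        exact Finset.sum_congr rfl fun i hi => (integral_mul_integral_swap_triangle hh
          ((intervalIntegrable_iff_integrableOn_Icc_of_le zero_le_one).2 (hαint i hi))).symm
    _ ≤ ∫ u in (0:ℝ)..1, h u * (ζ * Pn' n (1 - u) + η' u) :=
        intervalIntegral.integral_mono_on zero_le_one
          (hh.mul_continuousOn (continuousOn_const.add (continuousOn_finsetSum _ hA)))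
          (hh.mul_continuousOn ((continuousOn_const.mul hP).add (hI ▸ hη'cont)))
          fun u hu => mul_le_mul_of_nonneg_left (hdual4 u hu) (hh0 u hu)
    _ = ζ + ∫ u in (0:ℝ)..1, h u * η' u := by
        simp_rw [mul_add, mul_left_comm (h _) ζ]
        rw [intervalIntegral.integral_add ((hh.mul_continuousOn hP).const_mul ζ) hhη,
          intervalIntegral.integral_const_mul, hc3, mul_one]
    _ ≤ ζ := by linarith

theorem stmt_1_general
    (n : ℕ) (hn : 2 ≤ n)
    (d : ℕ → ℝ) (hd : ∀ i ∈ Finset.Icc 1 n, 0 ≤ d i)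
    (h : ℝ → ℝ) (hh0 : ∀ u ∈ Set.Icc (0:ℝ) 1, 0 ≤ h u)
    (hhmono : MonotoneOn h (Set.Icc 0 1))
    (hc1 : d 1 ≤ ∫ u in (0:ℝ)..1, h u)
    (hc2 : ∀ i, 2 ≤ i → i ≤ n → ∀ q ∈ Set.Icc (0:ℝ) 1,
      d i ≤ (∫ u in (0:ℝ)..q, h u) + (1 - q) * d (i-1))
    (hc3 : (∫ u in (0:ℝ)..1, h u * Pn' n (1-u)) = 1)
    (α₁ : ℝ) (hα₁ : 0 ≤ α₁)
    (α : ℕ → ℝ → ℝ)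
    (hα0 : ∀ i, 2 ≤ i → i ≤ n → ∀ q ∈ Set.Icc (0:ℝ) 1, 0 ≤ α i q)
    (hαint : ∀ i, 2 ≤ i → i ≤ n → IntegrableOn (α i) (Set.Icc 0 1))
    (η η' : ℝ → ℝ)
    (hη0 : ∀ u ∈ Set.Icc (0:ℝ) 1, 0 ≤ η u)
    (hηderiv : ∀ u ∈ Set.Icc (0:ℝ) 1, HasDerivAt η (η' u) u)
    (hη'cont : ContinuousOn η' (Set.Icc 0 1))
    (hη1 : η 1 = 0)
    (ζ : ℝ)
    (hdual1 : α₁ ≥ (∫ q in (0:ℝ)..1, (1-q) * α 2 q) + 1)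
    (hdual2 : ∀ i, 2 ≤ i → i ≤ n-1 →
      (∫ q in (0:ℝ)..1, α i q) ≥ (∫ q in (0:ℝ)..1, (1-q) * α (i+1) q) + 1)
    (hdual3 : (∫ q in (0:ℝ)..1, α n q) ≥ 1)
    (hdual4 : ∀ u ∈ Set.Icc (0:ℝ) 1,
      ζ * Pn' n (1-u) + η' u ≥ α₁ + ∑ i ∈ Finset.Icc 2 n, ∫ q in u..(1:ℝ), α i q) :
    ζ ≥ ∑ i ∈ Finset.Icc 1 n, d i := by
  have hH : ContinuousOn (fun q => ∫ u in (0:ℝ)..q, h u) (Icc 0 1) := by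
    rw [← Set.uIcc_of_le zero_le_one] at hhmono ⊢
    exact intervalIntegral.continuousOn_primitive_interval
      (hhmono.integrableOn_isCompact isCompact_uIcc)
  have hprimal : ∀ i ∈ Finset.Icc 2 n,
      (∫ q in (0:ℝ)..1, α i q) * d i - (∫ q in (0:ℝ)..1, (1 - q) * α i q) * d (i - 1)
        ≤ ∫ q in (0:ℝ)..1, α i q * ∫ u in (0:ℝ)..q, h u := fun i hi => by
    obtain ⟨hi2, hin⟩ := Finset.mem_Icc.1 hi
    have := integral_mul_le_of_le_add_mul zero_le_one (hα0 i hi2 hin)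
      ((intervalIntegrable_iff_integrableOn_Icc_of_le zero_le_one).2 (hαint i hi2 hin)) hH
      (c := fun q => 1 - q) (by fun_prop) (hc2 i hi2 hin)
    linarith
  calc ∑ i ∈ Finset.Icc 1 n, d i
      ≤ α₁ * d 1 + ∑ i ∈ Finset.Icc 2 n,
          ((∫ q in (0:ℝ)..1, α i q) * d i
            - (∫ q in (0:ℝ)..1, (1 - q) * α i q) * d (i - 1)) :=
        sum_le_of_dual_feasible hn hd hdual1 hdual2 hdual3
    _ ≤ α₁ * (∫ u in (0:ℝ)..1, h u)
          + ∑ i ∈ Finset.Icc 2 n, ∫ q in (0:ℝ)..1, α i q * ∫ u in (0:ℝ)..q, h u :=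
        add_le_add (mul_le_mul_of_nonneg_left hc1 hα₁) (Finset.sum_le_sum hprimal)
    _ ≤ ζ := integrated_dual_constraint_le hh0 hhmono hc3
        (fun i hi => hαint i (Finset.mem_Icc.1 hi).1 (Finset.mem_Icc.1 hi).2)
        hη0 hηderiv hη'cont hη1 hdual4

/-- Weak duality between the primal linear program `(LP)_DC` and
its dual `(DLP)_DC`: any feasible dual value `ζ` dominates any feasible primal
value `∑_{i=1}^n d̂_i`. -/
theorem stmt_1
    (n : ℕ) (hn : 2 ≤ n)
    (d : ℕ → ℝ) (hd : ∀ i ∈ Finset.Icc 1 n, 0 ≤ d i)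
    (h : ℝ → ℝ) (hh0 : ∀ u ∈ Set.Icc (0:ℝ) 1, 0 ≤ h u)
    (hhmono : MonotoneOn h (Set.Icc 0 1))
    (hhint : IntegrableOn h (Set.Icc 0 1))
    (hc1 : d 1 ≤ ∫ u in (0:ℝ)..1, h u)
    (hc2 : ∀ i, 2 ≤ i → i ≤ n → ∀ q ∈ Set.Icc (0:ℝ) 1,
      d i ≤ (∫ u in (0:ℝ)..q, h u) + (1 - q) * d (i-1))
    (hc3 : (∫ u in (0:ℝ)..1, h u * Pn' n (1-u)) = 1)
    (α₁ : ℝ) (hα₁ : 0 ≤ α₁)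
    (α : ℕ → ℝ → ℝ)
    (hα0 : ∀ i, 2 ≤ i → i ≤ n → ∀ q ∈ Set.Icc (0:ℝ) 1, 0 ≤ α i q)
    (hαint : ∀ i, 2 ≤ i → i ≤ n → IntegrableOn (α i) (Set.Icc 0 1))
    (η η' : ℝ → ℝ)
    (hη0 : ∀ u ∈ Set.Icc (0:ℝ) 1, 0 ≤ η u)
    (hηderiv : ∀ u ∈ Set.Icc (0:ℝ) 1, HasDerivAt η (η' u) u)
    (hη'cont : ContinuousOn η' (Set.Icc 0 1))
    (hη1 : η 1 = 0)
    (ζ : ℝ)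
    (hdual1 : α₁ ≥ (∫ q in (0:ℝ)..1, (1-q) * α 2 q) + 1)
    (hdual2 : ∀ i, 2 ≤ i → i ≤ n-1 →
      (∫ q in (0:ℝ)..1, α i q) ≥ (∫ q in (0:ℝ)..1, (1-q) * α (i+1) q) + 1)
    (hdual3 : (∫ q in (0:ℝ)..1, α n q) ≥ 1)
    (hdual4 : ∀ u ∈ Set.Icc (0:ℝ) 1,
      ζ * Pn' n (1-u) + η' u ≥ α₁ + ∑ i ∈ Finset.Icc 2 n, ∫ q in u..(1:ℝ), α i q) :
    ζ ≥ ∑ i ∈ Finset.Icc 1 n, d i :=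
  stmt_1_general n hn d hd h hh0 hhmono hc1 hc2 hc3 α₁ hα₁ α hα0 hαint η η' hη0 hηderiv hη'cont hη1
    ζ hdual1 hdual2 hdual3 hdual4
end

section
/- Fix an integer n ≥ 2, a real ζ > 0, and reals 0 ≤ ε_n < ε_{n−1} < … < ε_2 < ε_1 = 1. Define α_1 = ζ and α_i(q) = ζ·P_n''(1−q)·1_{[ε_i, ε_{i−1})}(q) for i = 2,…,n. If these satisfy with equality: α_1 = ∫_0^1 (1−q)·α_2(q) dq + 1; ∫_0^1 α_i(q) dq = ∫_0^1 (1−q)·α_{i+1}(q) dq + 1 for i = 2,…,n−1; and ∫_0^1 α_n(q) dq = 1; then for every j = 1,…,n−1 the recurrence (★) holds: P_n'(1−ε_{j+1}) − P_n'(1−ε_j) = ε_{j+1}·P_n'(1−ε_{j+1}) + P_n(1−ε_{j+1}) − j/ζ. -/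
open MeasureTheory Finset

/-- `P_n''(t) = ∑_{i=1}^n i (i-1) t^{i-2}`. -/
noncomputable def Pn'' (n : ℕ) (t : ℝ) : ℝ :=
  ∑ i ∈ Finset.Icc 1 n, (i : ℝ) * ((i : ℝ) - 1) * t ^ (i - 2)

lemma hasDerivAt_Pn (n : ℕ) (t : ℝ) : HasDerivAt (Pn n) (Pn' n t) t := by
  unfold Pn Pn'
  exact HasDerivAt.fun_sum fun i _ => hasDerivAt_pow i t

lemma hasDerivAt_Pn' (n : ℕ) (t : ℝ) : HasDerivAt (Pn' n) (Pn'' n t) t := by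
  unfold Pn' Pn''
  refine HasDerivAt.fun_sum fun i hi =>
    ((hasDerivAt_pow (i - 1) t).const_mul (i : ℝ)).congr_deriv ?_
  rw [Nat.cast_sub (Finset.mem_Icc.mp hi).1, Nat.sub_sub]
  push_cast
  ring

lemma continuous_Pn'' (n : ℕ) : Continuous (Pn'' n) := by
  unfold Pn''
  fun_prop

lemma Pn_zero (n : ℕ) : Pn n 0 = 0 :=
  Finset.sum_eq_zero fun i hi => zero_pow (by have := (Finset.mem_Icc.mp hi).1; omega)

lemma Pn'_zero {n : ℕ} (hn : 1 ≤ n) : Pn' n 0 = 1 := by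
  unfold Pn'
  rw [Finset.sum_eq_single_of_mem 1 (Finset.mem_Icc.mpr ⟨le_rfl, hn⟩)]
  · norm_num
  · intro i hi hi1
    have : i - 1 ≠ 0 := by have := (Finset.mem_Icc.mp hi).1; omega
    simp [zero_pow this]

lemma integral_Pn'' (n : ℕ) (a b : ℝ) : ∫ t in a..b, Pn'' n t = Pn' n b - Pn' n a :=
  intervalIntegral.integral_eq_sub_of_hasDerivAt (fun t _ => hasDerivAt_Pn' n t)
    ((continuous_Pn'' n).intervalIntegrable a b)

lemma integral_mul_Pn'' (n : ℕ) (a b : ℝ) :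
    ∫ t in a..b, t * Pn'' n t = (b * Pn' n b - Pn n b) - (a * Pn' n a - Pn n a) := by
  have hcont : Continuous fun t => t * Pn'' n t := continuous_id.mul (continuous_Pn'' n)
  refine intervalIntegral.integral_eq_sub_of_hasDerivAt (f := fun t => t * Pn' n t - Pn n t)
    (fun t _ => ?_) (hcont.intervalIntegrable a b)
  exact (((hasDerivAt_id t).mul (hasDerivAt_Pn' n t)).sub (hasDerivAt_Pn n t)).congr_deriv
    (by simp)

lemma intervalIntegral_indicator_Ico {E : Type*} [NormedAddCommGroup E] [NormedSpace ℝ E]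
    {a b c d : ℝ} (hca : c ≤ a) (hab : a ≤ b) (hbd : b ≤ d) (f : ℝ → E) :
    ∫ x in c..d, (Set.Ico a b).indicator f x = ∫ x in a..b, f x := by
  have hae : (Set.Ico a b).indicator f =ᵐ[volume] (Set.Ioc a b).indicator f :=
    indicator_ae_eq_of_ae_eq_set Ico_ae_eq_Ioc
  rw [intervalIntegral.integral_congr_ae (hae.mono fun x hx _ => hx),
    intervalIntegral.integral_of_le (hca.trans (hab.trans hbd)),
    intervalIntegral.integral_of_le hab,
    integral_indicator measurableSet_Ioc, Measure.restrict_restrict measurableSet_Ioc,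
    Set.inter_eq_left.mpr (Set.Ioc_subset_Ioc hca hbd)]

lemma integral_indicator_Ico_Pn'' (n : ℕ) (ζ : ℝ) {a b : ℝ} (ha : 0 ≤ a) (hab : a ≤ b)
    (hb : b ≤ 1) :
    ∫ q in (0:ℝ)..1, (Set.Ico a b).indicator (fun q' => ζ * Pn'' n (1 - q')) q
      = ζ * (Pn' n (1 - a) - Pn' n (1 - b)) := by
  rw [intervalIntegral_indicator_Ico ha hab hb, intervalIntegral.integral_const_mul,
    intervalIntegral.integral_comp_sub_left (Pn'' n), integral_Pn'']

lemma integral_mul_indicator_Ico_Pn'' (n : ℕ) (ζ : ℝ) {a b : ℝ} (ha : 0 ≤ a) (hab : a ≤ b)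
    (hb : b ≤ 1) :
    ∫ q in (0:ℝ)..1, (1 - q) * (Set.Ico a b).indicator (fun q' => ζ * Pn'' n (1 - q')) q
      = ζ * (((1 - a) * Pn' n (1 - a) - Pn n (1 - a))
          - ((1 - b) * Pn' n (1 - b) - Pn n (1 - b))) := by
  simp_rw [← Set.indicator_mul_right, mul_left_comm (1 - _) ζ]
  rw [intervalIntegral_indicator_Ico ha hab hb, intervalIntegral.integral_const_mul,
    intervalIntegral.integral_comp_sub_left (fun t => t * Pn'' n t), integral_mul_Pn'']

lemma mul_sub_eq_neg_of_dual_equalities {x y : ℕ → ℝ} {ζ : ℝ} {m : ℕ} (hx1 : x 1 = 1)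
    (hy1 : y 1 = 0) (h1 : ζ = ζ * (y 2 - y 1) + 1)
    (hstep : ∀ i, 2 ≤ i → i ≤ m → ζ * (x i - x (i - 1)) = ζ * (y (i + 1) - y i) + 1) :
    ∀ j, 1 ≤ j → j ≤ m → ζ * (y (j + 1) - x j) = -j := by
  intro j hj
  induction j, hj using Nat.le_induction with
  | base => intro _; rw [hx1]; rw [hy1] at h1; push_cast; linarith
  | succ k hk ih =>
    intro hkm
    have := hstep (k + 1) (by omega) hkm
    simp only [Nat.add_sub_cancel] at this
    push_cast
    linarith [ih (by omega)]

lemma zero_le_and_le_pred_and_pred_le_one {ε : ℕ → ℝ} {n : ℕ} (hε1 : ε 1 = 1) (hεn : 0 ≤ ε n)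
    (hstep : ∀ j, 1 ≤ j → j < n → ε (j + 1) ≤ ε j) {i : ℕ} (hi : 2 ≤ i) (hin : i ≤ n) :
    0 ≤ ε i ∧ ε i ≤ ε (i - 1) ∧ ε (i - 1) ≤ 1 := by
  have hanti : AntitoneOn ε (Set.Icc 1 n) :=
    antitoneOn_of_succ_le Set.ordConnected_Icc fun j _ hj hj1 =>
      hstep j hj.1 (by simp only [Order.succ_eq_add_one, Set.mem_Icc] at hj1; omega)
  have mem : ∀ k, 1 ≤ k → k ≤ n → k ∈ Set.Icc 1 n := fun k h1 h2 => ⟨h1, h2⟩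
  refine ⟨hεn.trans (hanti (mem i (by omega) hin) (mem n (by omega) le_rfl) hin),
    hanti (mem _ (by omega) (by omega)) (mem i (by omega) hin) (by omega), ?_⟩
  exact hε1 ▸ hanti (mem 1 le_rfl (by omega)) (mem _ (by omega) (by omega)) (by omega)

theorem stmt_2_general
    (n : ℕ) (ζ : ℝ) (hζ : 0 < ζ)
    (ε : ℕ → ℝ) (hε1 : ε 1 = 1) (hεn : 0 ≤ ε n)
    (hdec : ∀ j, 1 ≤ j → j < n → ε (j+1) < ε j)
    (α : ℕ → ℝ → ℝ)
    (hα : ∀ i, 2 ≤ i → i ≤ n → ∀ q : ℝ,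
      α i q = Set.indicator (Set.Ico (ε i) (ε (i-1))) (fun q' => ζ * Pn'' n (1-q')) q)
    (heq1 : ζ = (∫ q in (0:ℝ)..1, (1-q) * α 2 q) + 1)
    (heq2 : ∀ i, 2 ≤ i → i ≤ n-1 →
      (∫ q in (0:ℝ)..1, α i q) = (∫ q in (0:ℝ)..1, (1-q) * α (i+1) q) + 1) :
    ∀ j, 1 ≤ j → j ≤ n - 1 →
      Pn' n (1 - ε (j+1)) - Pn' n (1 - ε j)
        = ε (j+1) * Pn' n (1 - ε (j+1)) + Pn n (1 - ε (j+1)) - (j : ℝ) / ζ := by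
  intro j hj1 hjn
  have hint : ∀ i, 2 ≤ i → i ≤ n →
      (∫ q in (0:ℝ)..1, α i q) = ζ * (Pn' n (1 - ε i) - Pn' n (1 - ε (i - 1))) ∧
      (∫ q in (0:ℝ)..1, (1 - q) * α i q) = ζ * (((1 - ε i) * Pn' n (1 - ε i) - Pn n (1 - ε i))
        - ((1 - ε (i - 1)) * Pn' n (1 - ε (i - 1)) - Pn n (1 - ε (i - 1)))) := by
    intro i hi hin
    obtain ⟨ha, hab, hb⟩ := zero_le_and_le_pred_and_pred_le_one hε1 hεn
      (fun k hk hkn => (hdec k hk hkn).le) hi hin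
    simp only [hα i hi hin]
    exact ⟨integral_indicator_Ico_Pn'' n ζ ha hab hb, integral_mul_indicator_Ico_Pn'' n ζ ha hab hb⟩
  have key := mul_sub_eq_neg_of_dual_equalities (ζ := ζ) (m := n - 1)
    (x := fun i => Pn' n (1 - ε i)) (y := fun i => (1 - ε i) * Pn' n (1 - ε i) - Pn n (1 - ε i))
    (by simp [hε1, Pn'_zero (show 1 ≤ n by omega)]) (by simp [hε1, Pn_zero])
    (by rwa [(hint 2 le_rfl (by omega)).2] at heq1)
    (fun i hi hin => by
      rw [← (hint i hi (by omega)).1, heq2 i hi hin, (hint (i + 1) (by omega) (by omega)).2]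
      simp)
    j hj1 hjn
  field_simp
  linarith

/-- If the proposed dual solution
`α_1 = ζ`, `α_i(q) = ζ P_n''(1-q) 1_{[ε_i, ε_{i-1})}(q)` satisfies the dual constraints
with equality, then the quantiles `ε_j` satisfy the recurrence (★). -/
theorem stmt_2
    (n : ℕ) (hn : 2 ≤ n) (ζ : ℝ) (hζ : 0 < ζ)
    (ε : ℕ → ℝ) (hε1 : ε 1 = 1) (hεn : 0 ≤ ε n)
    (hdec : ∀ j, 1 ≤ j → j < n → ε (j+1) < ε j)
    (α : ℕ → ℝ → ℝ)
    (hα : ∀ i, 2 ≤ i → i ≤ n → ∀ q : ℝ,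
      α i q = Set.indicator (Set.Ico (ε i) (ε (i-1))) (fun q' => ζ * Pn'' n (1-q')) q)
    (heq1 : ζ = (∫ q in (0:ℝ)..1, (1-q) * α 2 q) + 1)
    (heq2 : ∀ i, 2 ≤ i → i ≤ n-1 →
      (∫ q in (0:ℝ)..1, α i q) = (∫ q in (0:ℝ)..1, (1-q) * α (i+1) q) + 1)
    (heq3 : (∫ q in (0:ℝ)..1, α n q) = 1) :
    ∀ j, 1 ≤ j → j ≤ n - 1 →
      Pn' n (1 - ε (j+1)) - Pn' n (1 - ε j)
        = ε (j+1) * Pn' n (1 - ε (j+1)) + Pn n (1 - ε (j+1)) - (j : ℝ) / ζ :=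
  stmt_2_general n ζ hζ ε hε1 hεn hdec α hα heq1 heq2
end

section
/- Let q > 1, a > 0, 0 < β ≤ 1, and let j ≥ 1 be an integer. Then for every integer k with 0 ≤ k ≤ j−1: (β(q²−1)/(2q²))·Σ_{l=k}^j q^{−(2l−k)}·⌊a·q^l + l + 2 − a/q⌋ ≤ aβ(q+1)/(2q) + (β/(2q^k))·(k + 2 − a/q + 1/(q²−1)). Moreover, (β/(2q^j))·⌊a·q^j + j + 2 − a/q⌋ ≤ aβ/2 + (β/(2q^j))·(j + 2 − a/q). -/
/-!
Drop the floors. Writing `l = k + m`, the `l`-th summand becomes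
`a q^{-m} + q^{-k} (k + 2 - a/q + m) q^{-2m}`, a geometric plus an arithmetico-geometric term.
For `a ≥ 0` every summand is nonnegative, so the finite sum is bounded by the whole series
`a q/(q-1) + q^{-k} q²/(q²-1) (k + 2 - a/q + 1/(q²-1))`,
and the factor `(q²-1)/(2q²)` turns this into the right-hand side.
The bound for `l = j` alone is just `⌊x⌋ ≤ x`.
-/

open Finset

lemma hasSum_add_natCast_mul_geometric {r : ℝ} (hr0 : 0 ≤ r) (hr1 : r < 1) (y : ℝ) :
    HasSum (fun m : ℕ => (y + m) * r ^ m) (y / (1 - r) + r / (1 - r) ^ 2) := by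
  have hgeom := (hasSum_geometric_of_lt_one hr0 hr1).mul_left y
  have hcoe := hasSum_coe_mul_geometric_of_norm_lt_one (𝕜 := ℝ)
    (by rwa [Real.norm_of_nonneg hr0])
  simpa only [add_mul, div_eq_mul_inv] using hgeom.add hcoe

lemma inv_pow_shift_mul_add_eq {q : ℝ} (hq : q ≠ 0) (a y : ℝ) (k m : ℕ) :
    (q ^ (2 * (k + m) - k))⁻¹ * (a * q ^ (k + m) + y)
      = a * q⁻¹ ^ m + (q ^ k)⁻¹ * y * (q ^ 2)⁻¹ ^ m := by
  rw [show 2 * (k + m) - k = k + 2 * m by omega, inv_pow, inv_pow, ← pow_mul]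
  field_simp
  ring

lemma hasSum_contractCost_bound {q : ℝ} (hq : 1 < q) (a : ℝ) (k : ℕ) :
    HasSum
      (fun m : ℕ =>
        (q ^ (2 * (k + m) - k))⁻¹ * (a * q ^ (k + m) + ((k + m : ℕ) : ℝ) + 2 - a / q))
      (a * q / (q - 1)
        + (q ^ k)⁻¹ * (q ^ 2 / (q ^ 2 - 1)) * (k + 2 - a / q + 1 / (q ^ 2 - 1))) := by
  have hq0 : 0 < q := by linarith
  have hq2 : 1 < q ^ 2 := one_lt_pow₀ hq two_ne_zero
  have hs :=
    (hasSum_geometric_of_lt_one (inv_nonneg.2 hq0.le) (inv_lt_one_of_one_lt₀ hq)).mul_left a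
  have hr := (hasSum_add_natCast_mul_geometric (inv_nonneg.2 (by positivity))
    (inv_lt_one_of_one_lt₀ hq2) (k + 2 - a / q)).mul_left (q ^ k)⁻¹
  have hterm : ∀ m : ℕ,
      (q ^ (2 * (k + m) - k))⁻¹ * (a * q ^ (k + m) + ((k + m : ℕ) : ℝ) + 2 - a / q)
        = a * q⁻¹ ^ m + (q ^ k)⁻¹ * ((k + 2 - a / q + m) * (q ^ 2)⁻¹ ^ m) := fun m => by
    rw [← mul_assoc, ← inv_pow_shift_mul_add_eq hq0.ne']
    push_cast
    ring
  have hq1 : q - 1 ≠ 0 := by linarith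
  have hq21 : q ^ 2 - 1 ≠ 0 := by linarith
  have hsum :
      a * q / (q - 1) + (q ^ k)⁻¹ * (q ^ 2 / (q ^ 2 - 1)) * (k + 2 - a / q + 1 / (q ^ 2 - 1))
        = a * (1 - q⁻¹)⁻¹ + (q ^ k)⁻¹ * ((k + 2 - a / q) / (1 - (q ^ 2)⁻¹)
            + (q ^ 2)⁻¹ / (1 - (q ^ 2)⁻¹) ^ 2) := by
    field_simp
  simpa only [hterm, hsum] using hs.add hr

lemma sum_Icc_contractCost_le {q a : ℝ} (hq : 1 < q) (ha : 0 ≤ a) (k j : ℕ) :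
    ∑ l ∈ Icc k j, (q ^ (2 * l - k))⁻¹ * (⌊a * q ^ l + (l : ℝ) + 2 - a / q⌋ : ℝ)
      ≤ a * q / (q - 1)
        + (q ^ k)⁻¹ * (q ^ 2 / (q ^ 2 - 1)) * (k + 2 - a / q + 1 / (q ^ 2 - 1)) := by
  have hq0 : 0 < q := by linarith
  have harg : ∀ l : ℕ, 0 ≤ a * q ^ l + (l : ℝ) + 2 - a / q := fun l => by
    have : a / q ≤ a * q ^ l :=
      (div_le_self ha hq.le).trans (le_mul_of_one_le_right ha (one_le_pow₀ hq.le))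
    have : (0 : ℝ) ≤ l := l.cast_nonneg
    linarith
  calc ∑ l ∈ Icc k j, (q ^ (2 * l - k))⁻¹ * (⌊a * q ^ l + (l : ℝ) + 2 - a / q⌋ : ℝ)
      ≤ ∑ l ∈ Icc k j, (q ^ (2 * l - k))⁻¹ * (a * q ^ l + (l : ℝ) + 2 - a / q) :=
        sum_le_sum fun l _ => mul_le_mul_of_nonneg_left (Int.floor_le _) (by positivity)
    _ = ∑ m ∈ range (j + 1 - k),
          (q ^ (2 * (k + m) - k))⁻¹ * (a * q ^ (k + m) + ((k + m : ℕ) : ℝ) + 2 - a / q) := by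
        rw [← Ico_add_one_right_eq_Icc, sum_Ico_eq_sum_range]
    _ ≤ _ := sum_le_hasSum _ (fun m _ => mul_nonneg (by positivity) (harg _))
        (hasSum_contractCost_bound hq a k)

theorem stmt_6_general
    (q a β : ℝ) (hq : 1 < q) (ha : 0 < a) (hβ0 : 0 < β)
    (j : ℕ) :
    (∀ k : ℕ, k ≤ j - 1 →
      β * (q^2 - 1) / (2*q^2) *
          ∑ l ∈ Finset.Icc k j, (q ^ (2*l - k))⁻¹ * (⌊a * q^l + (l:ℝ) + 2 - a/q⌋ : ℝ)
        ≤ a*β*(q+1)/(2*q) + β/(2*q^k) * ((k:ℝ) + 2 - a/q + 1/(q^2-1)))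
    ∧ β/(2*q^j) * (⌊a * q^j + (j:ℝ) + 2 - a/q⌋ : ℝ)
        ≤ a*β/2 + β/(2*q^j) * ((j:ℝ) + 2 - a/q) := by
  have hq0 : 0 < q := by linarith
  have hq2 : 1 < q ^ 2 := one_lt_pow₀ hq two_ne_zero
  refine ⟨fun k _ => ?_, ?_⟩
  · calc _ ≤ β * (q ^ 2 - 1) / (2 * q ^ 2) * (a * q / (q - 1)
            + (q ^ k)⁻¹ * (q ^ 2 / (q ^ 2 - 1)) * (k + 2 - a / q + 1 / (q ^ 2 - 1))) :=
          mul_le_mul_of_nonneg_left (sum_Icc_contractCost_le hq ha.le k j)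
            (div_nonneg (mul_nonneg hβ0.le (by linarith)) (by positivity))
      _ = _ := by
          have : q - 1 ≠ 0 := by linarith
          have : q ^ 2 - 1 ≠ 0 := by linarith
          field_simp
          ring
  · calc _ ≤ β / (2 * q ^ j) * (a * q ^ j + (j : ℝ) + 2 - a / q) :=
          mul_le_mul_of_nonneg_left (Int.floor_le _) (by positivity)
      _ = _ := by
          field_simp
          ring

/-- The expected contract costs `C(k)` of the quantile-based algorithm for
the uniform distribution are bounded by the simplified upper bounds `C̃(k)`. -/
theorem stmt_6
    (q a β : ℝ) (hq : 1 < q) (ha : 0 < a) (hβ0 : 0 < β) (hβ1 : β ≤ 1)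
    (j : ℕ) (hj : 1 ≤ j) :
    (∀ k : ℕ, k ≤ j - 1 →
      β * (q^2 - 1) / (2*q^2) *
          ∑ l ∈ Finset.Icc k j, (q ^ (2*l - k))⁻¹ * (⌊a * q^l + (l:ℝ) + 2 - a/q⌋ : ℝ)
        ≤ a*β*(q+1)/(2*q) + β/(2*q^k) * ((k:ℝ) + 2 - a/q + 1/(q^2-1)))
    ∧ β/(2*q^j) * (⌊a * q^j + (j:ℝ) + 2 - a/q⌋ : ℝ)
        ≤ a*β/2 + β/(2*q^j) * ((j:ℝ) + 2 - a/q) :=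
  stmt_6_general q a β hq ha hβ0 j
end

section
/- Let j ≥ 2 be an integer, 0 < β ≤ 1, q > 1, let C_0,…,C_j ≥ 0 satisfy q·C_k ≥ C_{k+1} for k = 0,…,j−1, let p_1,…,p_j ∈ (0,1], and let p̃ ∈ (0,1] satisfy p̃ ≤ p_k for all k = 1,…,j. For a vector of probabilities π = (π_1,…,π_j), let V(π) be the supremum of d_0 over all (d_0,…,d_{j+1}) ∈ [0,∞)^{j+2} satisfying: d_0 ≤ (1−β²)/(2β) + C_0 + Σ_{l=1}^j ((q−1)/q^l)·d_l + (1/q^j)·d_{j+1}; d_k ≤ (1−π_k)·d_{k−1} + π_k·(C_k + Σ_{l=1}^{j−k} ((q−1)/q^l)·d_{k+l} + (1/q^{j−k})·d_{j+1}) for k = 1,…,j−1; d_j ≤ (1−π_j)·d_{j−1} + π_j·(C_j + d_{j+1}); and d_{j+1} ≤ 0. Then V(p_1,…,p_j) ≤ V(p̃,…,p̃). -/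
open Finset

/-!
The right-hand sides of `(LP)_Unif(π, C)` form a monotone operator `T_π`, so the componentwise
supremum `s` of all feasible solutions is again feasible and, by Tarski's argument, a fixed point
of `T_π`; moreover `V(π) = s₀`. Write
`R_k = C_k + ∑_{l ≥ 1} (q-1)/q^l s_{k+l}` for the payoff of contracting in state `k`. The fixed-point equations give
`(1 + (q-1) π_{k+1}) (s_k - R_{k+1}) = q (s_k - R_k) + (q C_k - C_{k+1})` and
`s_k - R_k = (1 - π_k) (s_{k-1} - R_k)`, so `q C_k ≥ C_{k+1}` and induction on `k` give
`R_k ≤ s_{k-1}` for every `k`.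
So each tight constraint `s_k = (1 - π_k) s_{k-1} + π_k R_k` becomes slack when `π_k` is lowered
to `p̃`: `s` is feasible for `p̃`, whence `V(p) = s₀ ≤ V(p̃)`.
-/

/-- Feasibility for the linear program `(LP)_Unif(π, C)`. -/
def FeasUnif (j : ℕ) (q β : ℝ) (C : ℕ → ℝ) (π : ℕ → ℝ) (d : ℕ → ℝ) : Prop :=
  (∀ k ≤ j + 1, 0 ≤ d k) ∧
  d 0 ≤ (1 - β^2)/(2*β) + C 0 + (∑ l ∈ Finset.Icc 1 j, (q-1)/q^l * d l)
      + (1/q^j) * d (j+1) ∧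
  (∀ k, 1 ≤ k → k ≤ j - 1 →
    d k ≤ (1 - π k) * d (k-1)
      + π k * (C k + (∑ l ∈ Finset.Icc 1 (j-k), (q-1)/q^l * d (k+l))
          + (1/q^(j-k)) * d (j+1))) ∧
  d j ≤ (1 - π j) * d (j-1) + π j * (C j + d (j+1)) ∧
  d (j+1) ≤ 0

/-- The optimal value `V(π)` of the linear program `(LP)_Unif(π, C)`:
the supremum of `d_0` over all feasible solutions. -/
noncomputable def Vval (j : ℕ) (q β : ℝ) (C : ℕ → ℝ) (π : ℕ → ℝ) : ℝ :=
  sSup {x | ∃ d : ℕ → ℝ, FeasUnif j q β C π d ∧ d 0 = x}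

theorem Monotone.isFixedPt_csSup_setOf_le_map {α : Type*} [ConditionallyCompleteLattice α]
    {T : α → α} (hT : Monotone T) {a : α} (ha : a ≤ T a)
    (hbdd : BddAbove {x | a ≤ x ∧ x ≤ T x}) :
    Function.IsFixedPt T (sSup {x | a ≤ x ∧ x ≤ T x}) := by
  set S := {x | a ≤ x ∧ x ≤ T x}
  have hle : sSup S ≤ T (sSup S) :=
    csSup_le ⟨a, le_rfl, ha⟩ fun x hx => hx.2.trans (hT (le_csSup hbdd hx))
  have ha_le : a ≤ sSup S := le_csSup hbdd ⟨le_rfl, ha⟩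
  exact le_antisymm (le_csSup hbdd ⟨ha_le.trans hle, hT hle⟩) hle

lemma Finset.sum_Icc_one_eq_sum_range {M : Type*} [AddCommMonoid M] (f : ℕ → M) (n : ℕ) :
    ∑ l ∈ Icc 1 n, f l = ∑ l ∈ range n, f (l + 1) := by
  rw [← Ico_add_one_right_eq_Icc, sum_Ico_eq_sum_range, add_tsub_cancel_right]
  simp only [add_comm]

lemma sum_Icc_sub_one_div_pow {q : ℝ} (hq : q ≠ 0) (n : ℕ) :
    ∑ l ∈ Icc 1 n, (q - 1) / q ^ l = 1 - 1 / q ^ n := by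
  induction n with
  | zero => simp
  | succ n ih =>
    rw [sum_Icc_succ_top (by omega), ih]
    field_simp
    ring

namespace UnifLP

variable (j : ℕ) (q : ℝ)

noncomputable def cont (d : ℕ → ℝ) (k : ℕ) : ℝ :=
  ∑ l ∈ Icc 1 (j - k), (q - 1) / q ^ l * d (k + l)

noncomputable def payoff (C d : ℕ → ℝ) (k : ℕ) : ℝ :=
  C k + cont j q d k

/-- The operator `T_π` of right-hand sides of `(LP)_Unif(π, C)`, with `c = (1 - β²)/(2β)` and
with `d_{j+1} = 0` substituted (feasibility forces it). It reads `d` only at indices `≤ j`. -/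
noncomputable def step (c : ℝ) (C π d : ℕ → ℝ) (k : ℕ) : ℝ :=
  if k = 0 then c + payoff j q C d 0
  else if k ≤ j then (1 - π k) * d (k - 1) + π k * payoff j q C d k
  else 0

/-- Feasible solutions of `(LP)_Unif(π, C)`, normalised to vanish beyond index `j`. -/
def feasSet (c : ℝ) (C π : ℕ → ℝ) : Set (ℕ → ℝ) :=
  {d | 0 ≤ d ∧ d ≤ step j q c C π d}

variable {j q} {c : ℝ} {C π d e s : ℕ → ℝ} {k : ℕ}

lemma cont_self (d : ℕ → ℝ) : cont j q d j = 0 := by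
  simp [cont]

lemma step_zero : step j q c C π d 0 = c + payoff j q C d 0 := by
  simp [step]

lemma step_of_pos (hk0 : 1 ≤ k) (hkj : k ≤ j) :
    step j q c C π d k = (1 - π k) * d (k - 1) + π k * payoff j q C d k := by
  simp [step, Nat.one_le_iff_ne_zero.1 hk0, hkj]

lemma step_of_lt (hk : j < k) : step j q c C π d k = 0 := by
  simp [step, Nat.pos_iff_ne_zero.1 (Nat.zero_lt_of_lt hk), Nat.not_le.2 hk]

lemma cont_congr (h : ∀ i ≤ j, d i = e i) (k : ℕ) : cont j q d k = cont j q e k :=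
  sum_congr rfl fun l hl => by rw [h _ (by simp only [mem_Icc] at hl; omega)]

lemma step_congr (h : ∀ i ≤ j, d i = e i) : step j q c C π d = step j q c C π e := by
  funext k
  simp only [step, payoff, cont_congr h]
  split_ifs with hk0 hkj
  · rfl
  · rw [h _ (by omega)]
  · rfl

lemma cont_mono (hq : 1 ≤ q) (h : ∀ i ≤ j, d i ≤ e i) (k : ℕ) :
    cont j q d k ≤ cont j q e k :=
  sum_le_sum fun l hl =>
    mul_le_mul_of_nonneg_left (h _ (by simp only [mem_Icc] at hl; omega))
      (div_nonneg (sub_nonneg.2 hq) (pow_nonneg (zero_le_one.trans hq) l))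

lemma cont_const (hq : q ≠ 0) (m : ℝ) (k : ℕ) :
    cont j q (fun _ => m) k = (1 - 1 / q ^ (j - k)) * m := by
  rw [cont, ← sum_mul, sum_Icc_sub_one_div_pow hq]

lemma cont_succ (hq : q ≠ 0) (d : ℕ → ℝ) (hk : k < j) :
    q * cont j q d k = (q - 1) * d (k + 1) + cont j q d (k + 1) := by
  obtain ⟨n, hn⟩ : ∃ n, j - k = n + 1 := ⟨j - k - 1, by omega⟩
  have hn' : j - (k + 1) = n := by omega
  simp only [cont, hn, hn', sum_Icc_one_eq_sum_range, sum_range_succ', mul_add, mul_sum]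
  rw [add_comm]
  congr 1
  · simp only [zero_add, pow_one]
    field_simp
  · refine sum_congr rfl fun l _ => ?_
    rw [show k + (l + 1 + 1) = k + 1 + (l + 1) by ring, pow_succ]
    field_simp

lemma step_mono (hq : 1 ≤ q) (hπ : ∀ k, 1 ≤ k → k ≤ j → π k ∈ Set.Icc 0 1) :
    Monotone (step j q c C π) := by
  intro d e h k
  have hcont := cont_mono hq (fun i _ => h i) (q := q) (j := j)
  simp only [step, payoff]
  split_ifs with hk0 hkj
  · linarith [hcont 0]
  · have hπk := hπ k (by omega) hkj
    exact add_le_add (mul_le_mul_of_nonneg_left (h _) (sub_nonneg.2 hπk.2))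
      (mul_le_mul_of_nonneg_left (add_le_add_right (hcont k) _) hπk.1)
  · rfl

lemma zero_mem_feasSet (hc : 0 ≤ c) (hC : ∀ k ≤ j, 0 ≤ C k)
    (hπ : ∀ k, 1 ≤ k → k ≤ j → 0 ≤ π k) : 0 ∈ feasSet j q c C π := by
  refine ⟨le_rfl, fun k => ?_⟩
  have hcont : ∀ i, cont j q 0 i = 0 := fun i => by simp [cont]
  simp only [step, payoff, hcont, Pi.zero_apply, mul_zero, zero_add, add_zero]
  split_ifs with hk0 hkj
  · linarith [hC 0 (Nat.zero_le j)]
  · exact mul_nonneg (hπ k (by omega) hkj) (hC k hkj)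
  · rfl

lemma le_pow_mul_of_le_step (hq : 1 < q) (hc : 0 ≤ c) (hC : 0 ≤ C k)
    (hπ : ∀ i, 1 ≤ i → i ≤ j → π i ∈ Set.Ioc 0 1) (hkj : k ≤ j)
    (hmax : ∀ i ≤ j, d i ≤ d k) (h : d k ≤ step j q c C π d k) :
    d k ≤ q ^ j * (c + C k) := by
  have hcont := (cont_mono hq.le hmax k).trans_eq (cont_const (by positivity) (d k) k)
  rcases Nat.eq_zero_or_pos k with rfl | hk0
  · rw [step_zero, payoff] at h
    rw [Nat.sub_zero] at hcont
    rw [← div_le_iff₀' (by positivity), div_eq_mul_one_div]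
    linarith
  · rw [step_of_pos hk0 hkj, payoff] at h
    have hπk := hπ k hk0 hkj
    have hprev : (1 - π k) * d (k - 1) ≤ (1 - π k) * d k :=
      mul_le_mul_of_nonneg_left (hmax _ (by omega)) (sub_nonneg.2 hπk.2)
    have hmul : π k * (d k * (1 / q ^ (j - k))) ≤ π k * C k := by
      linarith [mul_le_mul_of_nonneg_left hcont hπk.1.le]
    have hdiv : d k / q ^ (j - k) ≤ C k := by
      rw [div_eq_mul_one_div]
      exact le_of_mul_le_mul_left hmul hπk.1
    calc d k ≤ q ^ (j - k) * C k := (div_le_iff₀' (by positivity)).1 hdiv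
      _ ≤ q ^ j * C k := mul_le_mul_of_nonneg_right (pow_le_pow_right₀ hq.le (by omega)) hC
      _ ≤ q ^ j * (c + C k) := by gcongr; linarith

lemma bddAbove_feasSet (hq : 1 < q) (hc : 0 ≤ c) (hC : ∀ k ≤ j, 0 ≤ C k)
    (hπ : ∀ k, 1 ≤ k → k ≤ j → π k ∈ Set.Ioc 0 1) :
    BddAbove (feasSet j q c C π) := by
  refine ⟨fun _ => q ^ j * (c + ∑ i ∈ range (j + 1), C i), fun d hd i => ?_⟩
  obtain ⟨k, hk, hmax⟩ := exists_max_image (range (j + 1)) d nonempty_range_add_one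
  have hkj : k ≤ j := Nat.lt_succ_iff.1 (mem_range.1 hk)
  have hmax' : ∀ i ≤ j, d i ≤ d k := fun i hi => hmax i (mem_range.2 (Nat.lt_succ_of_le hi))
  have hdi : d i ≤ d k := by
    by_cases hij : i ≤ j
    · exact hmax' i hij
    · calc d i ≤ step j q c C π d i := hd.2 i
        _ = 0 := step_of_lt (Nat.lt_of_not_le hij)
        _ ≤ d k := hd.1 k
  have hCk : C k ≤ ∑ i ∈ range (j + 1), C i :=
    single_le_sum (fun i hi => hC i (Nat.lt_succ_iff.1 (mem_range.1 hi))) hk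
  calc d i ≤ d k := hdi
    _ ≤ q ^ j * (c + C k) := le_pow_mul_of_le_step hq hc (hC k hkj) hπ hkj hmax' (hd.2 k)
    _ ≤ q ^ j * (c + ∑ i ∈ range (j + 1), C i) := by gcongr

lemma feasUnif_iff {β : ℝ} (hj : 1 ≤ j) :
    FeasUnif j q β C π d ↔
      ∀ k ≤ j + 1, 0 ≤ d k ∧ d k ≤ step j q ((1 - β ^ 2) / (2 * β)) C π d k := by
  constructor
  · rintro ⟨hnn, h0, hmid, hlast, hend⟩
    have hz : d (j + 1) = 0 := le_antisymm hend (hnn _ le_rfl)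
    intro k hk
    refine ⟨hnn k hk, ?_⟩
    rcases (by omega : k = 0 ∨ (1 ≤ k ∧ k ≤ j - 1) ∨ k = j ∨ k = j + 1)
      with rfl | ⟨hk0, hkj⟩ | rfl | rfl
    · simpa [step_zero, payoff, cont, hz, add_assoc] using h0
    · simpa [step_of_pos hk0 (by omega : k ≤ j), payoff, cont, hz] using hmid k hk0 hkj
    · simpa [step_of_pos hj le_rfl, payoff, cont_self, hz] using hlast
    · simp [step_of_lt, hz]
  · intro h
    have hz : d (j + 1) = 0 :=
      le_antisymm ((h _ le_rfl).2.trans_eq (step_of_lt (Nat.lt_succ_self j))) (h _ le_rfl).1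
    refine ⟨fun k hk => (h k hk).1, ?_, fun k hk0 hkj => ?_, ?_, hz.le⟩
    · simpa [step_zero, payoff, cont, hz, add_assoc] using (h 0 (Nat.zero_le _)).2
    · simpa [step_of_pos hk0 (by omega : k ≤ j), payoff, cont, hz] using (h k (by omega)).2
    · simpa [step_of_pos hj le_rfl, payoff, cont_self, hz] using (h j (by omega)).2

lemma vval_eq_sSup_feasSet_apply {β : ℝ} (hj : 1 ≤ j) :
    Vval j q β C π = sSup (feasSet j q ((1 - β ^ 2) / (2 * β)) C π) 0 := by
  rw [Vval, sSup_apply_eq_sSup_image]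
  congr 1
  ext x
  constructor
  · rintro ⟨d, hd, rfl⟩
    rw [feasUnif_iff hj] at hd
    set e : ℕ → ℝ := fun k => if k ≤ j then d k else 0
    have hstep := step_congr (q := q) (c := (1 - β ^ 2) / (2 * β)) (C := C) (π := π)
      (fun i hi => if_pos hi : ∀ i ≤ j, e i = d i)
    refine ⟨e, ⟨fun k => ?_, fun k => ?_⟩, if_pos (Nat.zero_le j)⟩ <;>
      simp only [e, hstep, Pi.zero_apply] <;> split_ifs with hkj
    · exact (hd k (by omega)).1
    · exact le_rfl
    · exact (hd k (by omega)).2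
    · exact (step_of_lt (Nat.lt_of_not_le hkj)).ge
  · rintro ⟨d, hd, rfl⟩
    exact ⟨d, (feasUnif_iff hj).2 fun k _ => ⟨hd.1 k, hd.2 k⟩, rfl⟩

lemma gap_succ_eq (hq : q ≠ 0) (hs : step j q c C π s = s) (hk : k < j) :
    (1 + (q - 1) * π (k + 1)) * (s k - payoff j q C s (k + 1))
      = q * (s k - payoff j q C s k) + (q * C k - C (k + 1)) := by
  have hfix := congrFun hs (k + 1)
  rw [step_of_pos (Nat.le_add_left 1 k) hk, Nat.add_sub_cancel] at hfix
  unfold payoff at hfix ⊢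
  linear_combination cont_succ hq s hk - (q - 1) * hfix

lemma payoff_succ_le (hq : 1 ≤ q) (hCq : C (k + 1) ≤ q * C k) (hπ : 0 ≤ π (k + 1))
    (hs : step j q c C π s = s) (hk : k < j) (hR : payoff j q C s k ≤ s k) :
    payoff j q C s (k + 1) ≤ s k := by
  have hpos : 0 < 1 + (q - 1) * π (k + 1) :=
    add_pos_of_pos_of_nonneg one_pos (mul_nonneg (sub_nonneg.2 hq) hπ)
  have hgap := gap_succ_eq (by positivity) hs hk
  refine sub_nonneg.1 (nonneg_of_mul_nonneg_right ?_ hpos)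
  rw [hgap]
  exact add_nonneg (mul_nonneg (by linarith) (sub_nonneg.2 hR)) (sub_nonneg.2 hCq)

lemma payoff_le (hq : 1 ≤ q) (hc : 0 ≤ c) (hCq : ∀ k < j, C (k + 1) ≤ q * C k)
    (hπ : ∀ k, 1 ≤ k → k ≤ j → π k ∈ Set.Icc 0 1) (hs : step j q c C π s = s) :
    ∀ k ≤ j, payoff j q C s k ≤ s k := by
  intro k hk
  induction k with
  | zero =>
    have hfix := congrFun hs 0
    rw [step_zero] at hfix
    linarith
  | succ k ih =>
    have hπk := hπ (k + 1) (Nat.le_add_left 1 k) hk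
    have hR := payoff_succ_le hq (hCq k hk) hπk.1 hs hk (ih (by omega))
    have hfix := congrFun hs (k + 1)
    rw [step_of_pos (Nat.le_add_left 1 k) hk, Nat.add_sub_cancel] at hfix
    linarith [mul_nonneg (sub_nonneg.2 hπk.2) (sub_nonneg.2 hR)]

lemma le_step_of_prob_le {π' : ℕ → ℝ} (hq : 1 ≤ q) (hc : 0 ≤ c)
    (hCq : ∀ k < j, C (k + 1) ≤ q * C k) (hπ : ∀ k, 1 ≤ k → k ≤ j → π k ∈ Set.Icc 0 1)
    (hs : step j q c C π s = s) (hπ' : ∀ k, 1 ≤ k → k ≤ j → π' k ≤ π k) :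
    s ≤ step j q c C π' s := by
  intro k
  rw [← congrFun hs k]
  rcases k with _ | k
  · simp only [step_zero, le_rfl]
  by_cases hk : k + 1 ≤ j
  · have hR := payoff_succ_le hq (hCq k hk) (hπ (k + 1) (by omega) hk).1 hs hk
      (payoff_le hq hc hCq hπ hs k (by omega))
    simp only [step_of_pos (Nat.le_add_left 1 k) hk, Nat.add_sub_cancel]
    linarith [mul_nonneg (sub_nonneg.2 (hπ' (k + 1) (by omega) hk)) (sub_nonneg.2 hR)]
  · simp only [step_of_lt (Nat.lt_of_not_le hk), le_rfl]

end UnifLP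

open UnifLP in
/-- Replacing the transition probabilities `p_1, …, p_j` by a uniform
lower bound `p̃` can only increase the optimal value of `(LP)_Unif`. -/
theorem stmt_7
    (j : ℕ) (hj : 2 ≤ j) (q β : ℝ) (hq : 1 < q) (hβ0 : 0 < β) (hβ1 : β ≤ 1)
    (C : ℕ → ℝ) (hC0 : ∀ k ≤ j, 0 ≤ C k)
    (hCq : ∀ k, k ≤ j - 1 → q * C k ≥ C (k+1))
    (p : ℕ → ℝ) (hp : ∀ k, 1 ≤ k → k ≤ j → p k ∈ Set.Ioc (0:ℝ) 1)
    (pt : ℝ) (hpt : pt ∈ Set.Ioc (0:ℝ) 1)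
    (hple : ∀ k, 1 ≤ k → k ≤ j → pt ≤ p k) :
    Vval j q β C p ≤ Vval j q β C (fun _ => pt) := by
  have hc : 0 ≤ (1 - β ^ 2) / (2 * β) := div_nonneg (by nlinarith) (by linarith)
  have hCq' : ∀ k < j, C (k + 1) ≤ q * C k := fun k hk => hCq k (by omega)
  have hp' : ∀ k, 1 ≤ k → k ≤ j → p k ∈ Set.Icc 0 1 :=
    fun k hk0 hkj => Set.Ioc_subset_Icc_self (hp k hk0 hkj)
  have hzero := zero_mem_feasSet (q := q) hc hC0 fun k hk0 hkj => (hp' k hk0 hkj).1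
  have hbdd := bddAbove_feasSet hq hc hC0 hp
  set s := sSup (feasSet j q ((1 - β ^ 2) / (2 * β)) C p)
  have hs : step j q _ C p s = s :=
    (step_mono hq.le hp').isFixedPt_csSup_setOf_le_map hzero.2 hbdd
  have hs_mem : s ∈ feasSet j q ((1 - β ^ 2) / (2 * β)) C (fun _ => pt) :=
    ⟨le_csSup hbdd hzero, le_step_of_prob_le hq.le hc hCq' hp' hs hple⟩
  rw [vval_eq_sSup_feasSet_apply (by omega), vval_eq_sSup_feasSet_apply (by omega)]
  exact le_csSup (bddAbove_feasSet hq hc hC0 fun _ _ _ => hpt) hs_mem 0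
end

section
/- Let j ≥ 2 be an integer, q > 1, and p̃ ∈ ((q−1)/(2q−1), 1). Set E = (2q−1)·p̃ − (q−1), θ = (q−1)/E, and λ = (1+(q−1)p̃)/(q(1−p̃)). Define α_0 = θ·(q·p̃/(q−1) − (1−p̃)·λ^{−j}) and α_k = θ·(1 − λ^{k−(j+1)}) for k = 1,…,j. Then α_0, α_1, …, α_j are all nonnegative and satisfy with equality: α_0 = (1−p̃)·α_1 + 1; α_k = (1−p̃)·α_{k+1} + ((q−1)/q^k)·α_0 + p̃·Σ_{l=1}^{k−1} ((q−1)/q^{k−l})·α_l for k = 1,…,j−1; and α_j = ((q−1)/q^j)·α_0 + p̃·Σ_{l=1}^{j−1} ((q−1)/q^{j−l})·α_l. -/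
/-!
For `k ≥ 1` the equation (D2) is linear and homogeneous in `a`, and it has two explicit
solutions: the constant sequence `1` (with value `qp/(q-1)` at `0`) and the geometric sequence `λ^k` (with value `(1-p)λ` at `0`).
The geometric one works precisely because `qλ - 1 = qp/(1-p)`, i.e. `q(1-p)λ = 1 + (q-1)p`.
The proposed solution is `θ (const - λ^{-(j+1)} geom)`: the coefficient `λ^{-(j+1)}` makes it vanish
at `j + 1`, which turns (D2) at `k = j` into (D3); in (D1) the geometric part cancels and the
constant part leaves `θ E / (q - 1) = 1`. Nonnegativity is `λ > 1`, which is equivalent to `E > 0`.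
-/

open Finset

lemma sum_Icc_div_pow_sub_mul {q : ℝ} (hq : q ≠ 0) (c : ℝ) (x : ℕ → ℝ) (k : ℕ) :
    ∑ l ∈ Icc 1 (k - 1), c / q ^ (k - l) * x l = c / q ^ k * ∑ l ∈ Ico 1 k, q ^ l * x l := by
  have hIcc : Icc 1 (k - 1) = Ico 1 k := by ext; simp only [mem_Icc, mem_Ico]; omega
  rw [hIcc, mul_sum]
  refine sum_congr rfl fun l hl => ?_
  rw [← pow_sub_mul_pow q (mem_Ico.mp hl).2.le]
  field_simp

/-- The right-hand side of (D3) at `k`; (D2) is `a k = (1 - p) * a (k + 1) + dualRhs p q a k`. -/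
noncomputable def dualRhs (p q : ℝ) (a : ℕ → ℝ) (k : ℕ) : ℝ :=
  (q - 1) / q ^ k * a 0 + p * ∑ l ∈ Icc 1 (k - 1), (q - 1) / q ^ (k - l) * a l

lemma dualRhs_congr {p q : ℝ} {a b : ℕ → ℝ} {k : ℕ} (h : ∀ l ≤ k, a l = b l) :
    dualRhs p q a k = dualRhs p q b k := by
  unfold dualRhs
  rw [h 0 k.zero_le, sum_congr rfl fun l hl => by rw [h l (by grind)]]

lemma dualRhs_mul_sub_mul (p q θ μ : ℝ) (a b : ℕ → ℝ) (k : ℕ) :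
    dualRhs p q (fun l => θ * (a l - μ * b l)) k =
      θ * (dualRhs p q a k - μ * dualRhs p q b k) := by
  have hsum : ∑ l ∈ Icc 1 (k - 1), (q - 1) / q ^ (k - l) * (θ * (a l - μ * b l)) =
      θ * (∑ l ∈ Icc 1 (k - 1), (q - 1) / q ^ (k - l) * a l -
        μ * ∑ l ∈ Icc 1 (k - 1), (q - 1) / q ^ (k - l) * b l) := by
    rw [mul_sub, mul_sum, mul_sum, mul_sum, ← sum_sub_distrib]
    exact sum_congr rfl fun _ _ => by ring
  simp only [dualRhs, hsum]
  ring

noncomputable def constSol (p q : ℝ) (k : ℕ) : ℝ := if k = 0 then q * p / (q - 1) else 1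

noncomputable def geomSol (p lam : ℝ) (k : ℕ) : ℝ := if k = 0 then (1 - p) * lam else lam ^ k

@[simp] lemma constSol_zero (p q : ℝ) : constSol p q 0 = q * p / (q - 1) := rfl

@[simp] lemma constSol_of_ne_zero (p q : ℝ) {k : ℕ} (hk : k ≠ 0) : constSol p q k = 1 :=
  if_neg hk

@[simp] lemma geomSol_zero (p lam : ℝ) : geomSol p lam 0 = (1 - p) * lam := rfl

@[simp] lemma geomSol_of_ne_zero (p lam : ℝ) {k : ℕ} (hk : k ≠ 0) : geomSol p lam k = lam ^ k :=
  if_neg hk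

lemma constSol_eq_dualRhs {p q : ℝ} (hq0 : q ≠ 0) (hq1 : q ≠ 1) {k : ℕ} (hk : 1 ≤ k) :
    constSol p q k = (1 - p) * constSol p q (k + 1) + dualRhs p q (constSol p q) k := by
  have hq1' : q - 1 ≠ 0 := sub_ne_zero.mpr hq1
  have hsum : ∑ l ∈ Ico 1 k, q ^ l * constSol p q l = (q ^ k - q) / (q - 1) := by
    rw [sum_congr rfl fun l hl => by rw [constSol_of_ne_zero _ _ (by grind), mul_one],
      geom_sum_Ico hq1 hk, pow_one]
  rw [dualRhs, sum_Icc_div_pow_sub_mul hq0, hsum, constSol_zero,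
    constSol_of_ne_zero _ _ (by omega : k ≠ 0), constSol_of_ne_zero _ _ k.add_one_ne_zero]
  field_simp
  ring

lemma geomSol_eq_dualRhs {p q lam : ℝ} (hq0 : q ≠ 0) (hql : q * lam ≠ 1)
    (hpq : q * (1 - p) * lam = 1 + (q - 1) * p) {k : ℕ} (hk : 1 ≤ k) :
    geomSol p lam k = (1 - p) * geomSol p lam (k + 1) + dualRhs p q (geomSol p lam) k := by
  have hql' : q * lam - 1 ≠ 0 := sub_ne_zero.mpr hql
  have hsum : ∑ l ∈ Ico 1 k, q ^ l * geomSol p lam l =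
      ((q * lam) ^ k - q * lam) / (q * lam - 1) := by
    rw [sum_congr rfl fun l hl => by rw [geomSol_of_ne_zero _ _ (by grind), ← mul_pow],
      geom_sum_Ico hql hk, pow_one]
  rw [dualRhs, sum_Icc_div_pow_sub_mul hq0, hsum, geomSol_zero,
    geomSol_of_ne_zero _ _ (by omega : k ≠ 0), geomSol_of_ne_zero _ _ k.add_one_ne_zero]
  field_simp
  linear_combination (q ^ k * lam ^ k * (1 - lam) - (q - 1) * lam) * hpq

noncomputable def dualSol (p q θ lam μ : ℝ) (k : ℕ) : ℝ :=
  θ * (constSol p q k - μ * geomSol p lam k)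

lemma dualSol_zero_eq {p q θ lam μ : ℝ} (hq : q ≠ 1)
    (hθ : θ * ((2 * q - 1) * p - (q - 1)) = q - 1) :
    dualSol p q θ lam μ 0 = (1 - p) * dualSol p q θ lam μ 1 + 1 := by
  have hq1 : q - 1 ≠ 0 := sub_ne_zero.mpr hq
  simp only [dualSol, constSol_zero, geomSol_zero, constSol_of_ne_zero _ _ one_ne_zero,
    geomSol_of_ne_zero _ _ one_ne_zero, pow_one]
  field_simp
  linear_combination hθ

lemma dualSol_eq_dualRhs {p q θ lam μ : ℝ} (hq0 : q ≠ 0) (hq1 : q ≠ 1) (hql : q * lam ≠ 1)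
    (hpq : q * (1 - p) * lam = 1 + (q - 1) * p) {k : ℕ} (hk : 1 ≤ k) :
    dualSol p q θ lam μ k =
      (1 - p) * dualSol p q θ lam μ (k + 1) + dualRhs p q (dualSol p q θ lam μ) k := by
  rw [show dualSol p q θ lam μ = fun l => θ * (constSol p q l - μ * geomSol p lam l) from rfl,
    dualRhs_mul_sub_mul]
  beta_reduce
  rw [constSol_eq_dualRhs hq0 hq1 hk, geomSol_eq_dualRhs hq0 hql hpq hk]
  ring

lemma zpow_natCast_sub {lam : ℝ} (hlam : lam ≠ 0) (k : ℕ) (m : ℤ) :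
    lam ^ ((k : ℤ) - m) = lam ^ (-m) * lam ^ k := by
  rw [← zpow_natCast, ← zpow_add₀ hlam, neg_add_eq_sub]

lemma dualSol_succ_eq_zero (p q θ : ℝ) {lam : ℝ} (hlam : lam ≠ 0) (j : ℕ) :
    dualSol p q θ lam (lam ^ (-((j : ℤ) + 1))) (j + 1) = 0 := by
  rw [dualSol, constSol_of_ne_zero _ _ j.add_one_ne_zero, geomSol_of_ne_zero _ _ j.add_one_ne_zero,
    ← zpow_natCast_sub hlam, Nat.cast_add, Nat.cast_one, sub_self, zpow_zero, sub_self, mul_zero]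

lemma eq_dualSol {p q θ lam : ℝ} (hlam : lam ≠ 0) {j : ℕ} {α : ℕ → ℝ}
    (hα0 : α 0 = θ * (q * p / (q - 1) - (1 - p) * lam ^ (-(j : ℤ))))
    (hαk : ∀ k, 1 ≤ k → k ≤ j → α k = θ * (1 - lam ^ ((k : ℤ) - ((j : ℤ) + 1)))) :
    ∀ k ≤ j, α k = dualSol p q θ lam (lam ^ (-((j : ℤ) + 1))) k := by
  rintro (_ | k) hk
  · have h := zpow_natCast_sub hlam 1 ((j : ℤ) + 1)
    rw [Nat.cast_one, sub_add_cancel_right, pow_one] at h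
    rw [hα0, dualSol, constSol_zero, geomSol_zero, h]
    ring
  · rw [hαk _ (Nat.le_add_left 1 k) hk, dualSol, constSol_of_ne_zero _ _ k.add_one_ne_zero,
      geomSol_of_ne_zero _ _ k.add_one_ne_zero, zpow_natCast_sub hlam]

lemma two_mul_sub_one_mul_sub_pos {p q : ℝ} (hq : 1 < q) (hp : (q - 1) / (2 * q - 1) < p) :
    0 < (2 * q - 1) * p - (q - 1) := by
  have := (div_lt_iff₀ (by linarith : (0 : ℝ) < 2 * q - 1)).mp hp
  linarith

lemma one_lt_div_of_sub_pos {p q : ℝ} (hq : 0 < q) (hp : p < 1)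
    (hE : 0 < (2 * q - 1) * p - (q - 1)) : 1 < (1 + (q - 1) * p) / (q * (1 - p)) := by
  rw [one_lt_div (mul_pos hq (by linarith))]
  linarith

/-- The explicit solution `α_0 = θ(qp̃/(q-1) - (1-p̃)λ^{-j})`,
`α_k = θ(1 - λ^{k-(j+1)})` is nonnegative and satisfies the dual constraints
(D1)–(D3) of `(DLP)_Unif` with equality. -/
theorem stmt_8
    (j : ℕ) (hj : 2 ≤ j) (q pt : ℝ) (hq : 1 < q)
    (hptlb : (q - 1)/(2*q - 1) < pt) (hpt1 : pt < 1)
    (E θ lam : ℝ)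
    (hE : E = (2*q - 1)*pt - (q - 1))
    (hθ : θ = (q - 1)/E)
    (hlam : lam = (1 + (q - 1)*pt)/(q*(1 - pt)))
    (α : ℕ → ℝ)
    (hα0 : α 0 = θ * (q*pt/(q - 1) - (1 - pt) * lam ^ (-(j:ℤ))))
    (hαk : ∀ k, 1 ≤ k → k ≤ j → α k = θ * (1 - lam ^ ((k:ℤ) - ((j:ℤ) + 1)))) :
    (∀ k ≤ j, 0 ≤ α k) ∧
    α 0 = (1 - pt) * α 1 + 1 ∧
    (∀ k, 1 ≤ k → k ≤ j - 1 →
      α k = (1 - pt) * α (k+1) + (q - 1)/q^k * α 0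
        + pt * ∑ l ∈ Finset.Icc 1 (k-1), (q - 1)/q^(k-l) * α l) ∧
    α j = (q - 1)/q^j * α 0 + pt * ∑ l ∈ Finset.Icc 1 (j-1), (q - 1)/q^(j-l) * α l := by
  have hE0 : 0 < E := hE ▸ two_mul_sub_one_mul_sub_pos hq hptlb
  have hlam1 : 1 < lam := hlam ▸ one_lt_div_of_sub_pos (by linarith) hpt1 (hE ▸ hE0)
  have hpq : q * (1 - pt) * lam = 1 + (q - 1) * pt :=
    hlam ▸ mul_div_cancel₀ _ (mul_pos (by linarith) (by linarith)).ne'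
  have hsol := eq_dualSol (p := pt) (q := q) (by positivity) hα0 hαk
  have hrhs {k : ℕ} (hk : k ≤ j) : dualRhs pt q α k = dualRhs pt q (dualSol pt q θ lam _) k :=
    dualRhs_congr fun l hl => hsol l (hl.trans hk)
  have hstep {k : ℕ} (hk : 1 ≤ k) := dualSol_eq_dualRhs (θ := θ) (μ := lam ^ (-((j : ℤ) + 1)))
    (by positivity) hq.ne' (one_lt_mul hq.le hlam1).ne' hpq hk
  have hD1 : α 0 = (1 - pt) * α 1 + 1 := by
    rw [hsol 0 j.zero_le, hsol 1 (by omega)]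
    exact dualSol_zero_eq hq.ne' (by rw [← hE, hθ, div_mul_cancel₀ _ hE0.ne'])
  have hnonneg : ∀ k, 1 ≤ k → k ≤ j → 0 ≤ α k := fun k hk1 hkj => by
    rw [hαk k hk1 hkj]
    exact mul_nonneg (hθ ▸ div_nonneg (by linarith) hE0.le)
      (sub_nonneg.mpr (zpow_le_one_of_nonpos₀ hlam1.le (by omega)))
  refine ⟨fun k hk => ?_, hD1, fun k hk1 hkj => ?_, ?_⟩
  · rcases Nat.eq_zero_or_pos k with rfl | hk1
    · rw [hD1]
      exact add_nonneg (mul_nonneg (by linarith) (hnonneg 1 le_rfl (by omega))) zero_le_one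
    · exact hnonneg k hk1 hk
  · have h := hstep hk1
    rw [← hsol k (by omega), ← hsol (k + 1) (by omega), ← hrhs (by omega)] at h
    simpa only [dualRhs, add_assoc] using h
  · have h := hstep (k := j) (by omega)
    rwa [dualSol_succ_eq_zero _ _ _ (by positivity), mul_zero, zero_add, ← hsol j le_rfl,
      ← hrhs le_rfl] at h
end

section
/- Let j ≥ 2 be an integer, q > 1, 0 < β ≤ 1, let p_1,…,p_j ∈ (0,1], and let C_0,…,C_j ≥ 0 satisfy q·C_k ≥ C_{k+1} for k = 0,…,j−1. Suppose d_0,…,d_{j+1} ≥ 0 satisfy with equality: d_0 = (1−β²)/(2β) + C_0 + Σ_{l=1}^j ((q−1)/q^l)·d_l + (1/q^j)·d_{j+1}; d_k = (1−p_k)·d_{k−1} + p_k·(C_k + Σ_{l=1}^{j−k} ((q−1)/q^l)·d_{k+l} + (1/q^{j−k})·d_{j+1}) for k = 1,…,j−1; d_j = (1−p_j)·d_{j−1} + p_j·(C_j + d_{j+1}); and d_{j+1} = 0. Then the sequence is non-increasing: d_{k−1} ≥ d_k for every k = 1,…,j+1. -/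
open Finset

/-!
Write `A_k = C_k + ∑_{l=1}^{j-k} (q-1)/q^l · d_{k+l}` (`tailCost`) for the cost of the option weighted by
`p_k`, so that (using `d_{j+1} = 0`) the constraints read `d_0 = (1-β²)/(2β) + A_0 ≥ A_0` and
`d_k = (1-p_k) d_{k-1} + p_k A_k`. Peeling off the first term of the geometric tail gives
`q A_k = q C_k - C_{k+1} + (q-1) d_{k+1} + A_{k+1}`, hence `(q-1) d_{k+1} + A_{k+1} ≤ q A_k`.
By induction `A_k ≤ d_k`: substituting the recursion for `d_{k+1}` into that inequality yields
`A_{k+1} ≤ d_k`, so `d_{k+1}` is a convex combination of `d_k` and the smaller `A_{k+1}`;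
it therefore lies between them, which is both the induction step and `d_{k+1} ≤ d_k`.
-/

section MixingRecursion

variable {q : ℝ} {p d A : ℕ → ℝ} {n : ℕ}

theorem le_and_le_of_mix_step {q p x a a' y : ℝ} (hq : 1 ≤ q) (hp0 : 0 ≤ p) (hp1 : p ≤ 1)
    (ha : a ≤ x) (hy : y = (1 - p) * x + p * a') (hrec : (q - 1) * y + a' ≤ q * a) :
    a' ≤ y ∧ y ≤ x := by
  subst hy
  have ha'x : a' ≤ x := by
    have hpos : 0 < (q - 1) * p + 1 := by nlinarith
    exact le_of_mul_le_mul_left (by nlinarith) hpos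
  constructor <;> nlinarith

theorem le_of_mix_recursion (hq : 1 ≤ q) (hp : ∀ k < n, 0 ≤ p (k + 1) ∧ p (k + 1) ≤ 1)
    (hd : ∀ k < n, d (k + 1) = (1 - p (k + 1)) * d k + p (k + 1) * A (k + 1))
    (hA : ∀ k < n, (q - 1) * d (k + 1) + A (k + 1) ≤ q * A k) (h0 : A 0 ≤ d 0) :
    ∀ k ≤ n, A k ≤ d k := by
  intro k
  induction k with
  | zero => exact fun _ ↦ h0
  | succ k ih =>
    intro hk
    obtain ⟨hp0, hp1⟩ := hp k hk
    exact (le_and_le_of_mix_step hq hp0 hp1 (ih (Nat.le_of_succ_le hk)) (hd k hk) (hA k hk)).1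

theorem succ_le_of_mix_recursion (hq : 1 ≤ q) (hp : ∀ k < n, 0 ≤ p (k + 1) ∧ p (k + 1) ≤ 1)
    (hd : ∀ k < n, d (k + 1) = (1 - p (k + 1)) * d k + p (k + 1) * A (k + 1))
    (hA : ∀ k < n, (q - 1) * d (k + 1) + A (k + 1) ≤ q * A k) (h0 : A 0 ≤ d 0) :
    ∀ k < n, d (k + 1) ≤ d k := by
  intro k hk
  obtain ⟨hp0, hp1⟩ := hp k hk
  have hAd := le_of_mix_recursion hq hp hd hA h0 k hk.le
  exact (le_and_le_of_mix_step hq hp0 hp1 hAd (hd k hk) (hA k hk)).2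

end MixingRecursion

theorem sum_Icc_one_succ_eq_add {M : Type*} [AddCommMonoid M] (f : ℕ → M) (m : ℕ) :
    ∑ l ∈ Icc 1 (m + 1), f l = f 1 + ∑ l ∈ Icc 1 m, f (l + 1) := by
  induction m with
  | zero => simp
  | succ m ih =>
    rw [sum_Icc_succ_top (by omega), ih, sum_Icc_succ_top (by omega), add_assoc]

section TailCost

variable (q : ℝ) (C d : ℕ → ℝ) (j : ℕ)

noncomputable def tailCost (k : ℕ) : ℝ :=
  C k + ∑ l ∈ Icc 1 (j - k), (q - 1) / q ^ l * d (k + l)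

variable {q}

theorem mul_tailCost {k : ℕ} (hq : q ≠ 0) (hk : k + 1 ≤ j) :
    q * tailCost q C d j k
      = q * C k - C (k + 1) + (q - 1) * d (k + 1) + tailCost q C d j (k + 1) := by
  obtain ⟨m, hm⟩ : ∃ m, j - k = m + 1 := ⟨j - (k + 1), by omega⟩
  have hm' : j - (k + 1) = m := by omega
  have hterm : ∀ l, (q - 1) / q ^ (l + 1) * d (k + (l + 1))
      = q⁻¹ * ((q - 1) / q ^ l * d (k + 1 + l)) := fun l ↦ by
    rw [show k + (l + 1) = k + 1 + l by omega, pow_succ]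
    field_simp
  simp only [tailCost, hm, hm', sum_Icc_one_succ_eq_add, hterm, ← mul_sum]
  field_simp
  ring

theorem tailCost_succ_le {k : ℕ} (hq : 0 < q) (hk : k + 1 ≤ j) (hCq : C (k + 1) ≤ q * C k) :
    (q - 1) * d (k + 1) + tailCost q C d j (k + 1) ≤ q * tailCost q C d j k := by
  rw [mul_tailCost C d j hq.ne' hk]
  linarith

end TailCost

theorem stmt_19_general
    (j : ℕ) (q β : ℝ) (hq : 1 < q) (hβ0 : 0 < β) (hβ1 : β ≤ 1)
    (p : ℕ → ℝ) (hp : ∀ k, 1 ≤ k → k ≤ j → p k ∈ Set.Ioc (0:ℝ) 1)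
    (C : ℕ → ℝ)
    (hCq : ∀ k, k ≤ j - 1 → q * C k ≥ C (k+1))
    (d : ℕ → ℝ) (hd0 : ∀ k ≤ j + 1, 0 ≤ d k)
    (he0 : d 0 = (1 - β^2)/(2*β) + C 0 + (∑ l ∈ Finset.Icc 1 j, (q - 1)/q^l * d l)
        + (1/q^j) * d (j+1))
    (hek : ∀ k, 1 ≤ k → k ≤ j - 1 →
      d k = (1 - p k) * d (k-1)
        + p k * (C k + (∑ l ∈ Finset.Icc 1 (j-k), (q - 1)/q^l * d (k+l))
            + (1/q^(j-k)) * d (j+1)))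
    (hej : d j = (1 - p j) * d (j-1) + p j * (C j + d (j+1)))
    (hlast : d (j+1) = 0) :
    ∀ k, 1 ≤ k → k ≤ j + 1 → d k ≤ d (k-1) := by
  have hrec : ∀ k < j, d (k + 1)
      = (1 - p (k + 1)) * d k + p (k + 1) * tailCost q C d j (k + 1) := by
    intro k hk
    rcases (show k + 1 < j ∨ k + 1 = j by omega) with hlt | rfl
    · simpa [tailCost, hlast] using hek (k + 1) (by omega) (by omega)
    · simpa [tailCost, hlast] using hej
  have h0 : tailCost q C d j 0 ≤ d 0 := by
    have : 0 ≤ (1 - β ^ 2) / (2 * β) := div_nonneg (by nlinarith) (by linarith)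
    simp only [tailCost, he0, hlast, Nat.sub_zero, zero_add, mul_zero, add_zero]
    linarith
  have hmono := succ_le_of_mix_recursion hq.le
    (fun k hk ↦ ⟨(hp (k + 1) (by omega) hk).1.le, (hp (k + 1) (by omega) hk).2⟩) hrec
    (fun k hk ↦ tailCost_succ_le C d j (by linarith) hk (hCq k (by omega))) h0
  rintro (_ | k) hk1 hk
  · omega
  rcases (show k < j ∨ k = j by omega) with hlt | rfl
  · exact hmono k hlt
  · simpa [hlast] using hd0 k (by omega)

/-- If `d_0, …, d_{j+1} ≥ 0` satisfy the constraints of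
`(LP)_Unif(p, C)` with equality and the costs satisfy `q C_k ≥ C_{k+1}`, then the
sequence `d` is non-increasing: `d_{k-1} ≥ d_k` for every `k = 1, …, j+1`. -/
theorem stmt_19
    (j : ℕ) (hj : 2 ≤ j) (q β : ℝ) (hq : 1 < q) (hβ0 : 0 < β) (hβ1 : β ≤ 1)
    (p : ℕ → ℝ) (hp : ∀ k, 1 ≤ k → k ≤ j → p k ∈ Set.Ioc (0:ℝ) 1)
    (C : ℕ → ℝ) (hC0 : ∀ k ≤ j, 0 ≤ C k)
    (hCq : ∀ k, k ≤ j - 1 → q * C k ≥ C (k+1))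
    (d : ℕ → ℝ) (hd0 : ∀ k ≤ j + 1, 0 ≤ d k)
    (he0 : d 0 = (1 - β^2)/(2*β) + C 0 + (∑ l ∈ Finset.Icc 1 j, (q - 1)/q^l * d l)
        + (1/q^j) * d (j+1))
    (hek : ∀ k, 1 ≤ k → k ≤ j - 1 →
      d k = (1 - p k) * d (k-1)
        + p k * (C k + (∑ l ∈ Finset.Icc 1 (j-k), (q - 1)/q^l * d (k+l))
            + (1/q^(j-k)) * d (j+1)))
    (hej : d j = (1 - p j) * d (j-1) + p j * (C j + d (j+1)))
    (hlast : d (j+1) = 0) :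
    ∀ k, 1 ≤ k → k ≤ j + 1 → d k ≤ d (k-1) :=
  stmt_19_general j q β hq hβ0 hβ1 p hp C hCq d hd0 he0 hek hej hlast
end
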